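/- For every n ≥ 3 there exists a coloring model on n vertices such that in the induced random graph distribution every unordered pair e of distinct vertices has marginal probability Pr[X_e] ≥ (n−2)·(3n−4−√(5n²−16n+12))/(2(n−1)²), and the sampled graph is disconnected with probability 1. -/

import Mathlib

open scoped Classical

structure ColoringModel (n : ℕ) where
  Ω : Fin n → Type
  fin : ∀ v, Fintype (Ω v)
  p : ∀ v, Ω v → ℝ
  nonneg : ∀ v ω, 0 ≤ p v ω
  sum_one : ∀ v, ∑ ω ∈ @Finset.univ (Ω v) (fin v), p v ω = 1
  f : ∀ u v : Fin n, Ω u → Ω v → Bool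
  symm : ∀ u v x y, f u v x y = f v u y x

def ColoringModel.graph {n : ℕ} (M : ColoringModel n) (ω : ∀ v, M.Ω v) :
    SimpleGraph (Fin n) where
  Adj u v := u ≠ v ∧ M.f u v (ω u) (ω v) = true
  symm := by
    constructor
    rintro u v ⟨h1, h2⟩
    refine ⟨h1.symm, ?_⟩
    rw [M.symm]
    exact h2
  loopless := ⟨fun u h => h.1 rfl⟩

noncomputable def ColoringModel.pr {n : ℕ} (M : ColoringModel n)
    (P : SimpleGraph (Fin n) → Prop) : ℝ :=
  letI := M.fin
  ∑ ω : (∀ v, M.Ω v), if P (M.graph ω) then ∏ v, M.p v (ω v) else 0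

noncomputable def ColoringModel.dist {n : ℕ} (M : ColoringModel n)
    (G : SimpleGraph (Fin n)) : ℝ :=
  M.pr (fun H => H = G)

/-!
Fix a hub `r`. Every other vertex is independently high with probability `h`, and the hub snubs
one uniformly random other vertex. Two non-hub vertices are adjacent when both are high; the hub
is adjacent to every low vertex except the snubbed one. If some vertex is high, the hub together
with the low vertices is a union of components missing it; otherwise the snubbed vertex is
isolated. So the graph is always disconnected. An edge between non-hub vertices has probability
`h²`, an edge at the hub `(1 - 1/(n-1))(1 - h)`, and the bound is their common value when `h`
balances the two.
-/

open Finset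

theorem Fintype.sum_ite_forall_mem_prod {ι R : Type*} {κ : ι → Type*} [Fintype ι] [DecidableEq ι]
    [∀ i, Fintype (κ i)] [CommSemiring R] (S : ∀ i, Finset (κ i)) (g : ∀ i, κ i → R) :
    ∑ x : ∀ i, κ i, (if ∀ i, x i ∈ S i then ∏ i, g i (x i) else 0) = ∏ i, ∑ c ∈ S i, g i c := by
  rw [prod_univ_sum, ← sum_filter]
  congr 1
  ext x
  simp [Fintype.mem_piFinset]

theorem SimpleGraph.not_connected_of_adj_closed {V : Type*} {G : SimpleGraph V} (K : Set V)
    (hK : ∀ a b, G.Adj a b → a ∈ K → b ∈ K) {x y : V} (hx : x ∈ K) (hy : y ∉ K) :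
    ¬ G.Connected := fun hG =>
  let ⟨d, _, hd, hd'⟩ := (hG.preconnected x y).some.exists_boundary_dart K hx hy
  hd' (hK _ _ d.adj hd)

attribute [local instance] ColoringModel.fin

namespace ColoringModel

section

variable {n : ℕ} (M : ColoringModel n) {P : SimpleGraph (Fin n) → Prop}

theorem prod_sum_le_pr (S : ∀ v, Finset (M.Ω v))
    (hS : ∀ ω : ∀ v, M.Ω v, (∀ v, ω v ∈ S v) → P (M.graph ω)) :
    ∏ v, ∑ c ∈ S v, M.p v c ≤ M.pr P := by
  rw [pr, ← Fintype.sum_ite_forall_mem_prod]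
  gcongr with ω
  split_ifs with hω hP hP
  · rfl
  · exact absurd (hS ω hω) hP
  · exact prod_nonneg fun v _ => M.nonneg v (ω v)
  · rfl

theorem mul_sum_le_pr {u v : Fin n} (huv : u ≠ v) (A : Finset (M.Ω u)) (B : Finset (M.Ω v))
    (hAB : ∀ ω : ∀ w, M.Ω w, ω u ∈ A → ω v ∈ B → P (M.graph ω)) :
    (∑ a ∈ A, M.p u a) * ∑ b ∈ B, M.p v b ≤ M.pr P := by
  let S : ∀ w, Finset (M.Ω w) := Function.update (Function.update (fun _ => univ) u A) v B
  have hSu : S u = A := by simp [S, Function.update_of_ne huv]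
  have hSv : S v = B := by simp [S]
  calc (∑ a ∈ A, M.p u a) * ∑ b ∈ B, M.p v b = ∏ w, ∑ c ∈ S w, M.p w c := by
        rw [Fintype.prod_eq_mul u v huv, hSu, hSv]
        intro w hw
        simp [S, Function.update_of_ne hw.1, Function.update_of_ne hw.2, M.sum_one]
    _ ≤ M.pr P := M.prod_sum_le_pr S fun ω hω => hAB ω (hSu ▸ hω u) (hSv ▸ hω v)

theorem pr_eq_one (hP : ∀ ω : ∀ v, M.Ω v, (∀ v, M.p v (ω v) ≠ 0) → P (M.graph ω)) :
    M.pr P = 1 := by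
  have hterm : ∀ ω : ∀ v, M.Ω v,
      (if P (M.graph ω) then ∏ v, M.p v (ω v) else 0) = ∏ v, M.p v (ω v) := by
    intro ω
    by_cases hω : ∀ v, M.p v (ω v) ≠ 0
    · rw [if_pos (hP ω hω)]
    · obtain ⟨v, hv⟩ := not_forall_not.mp hω
      rw [prod_eq_zero (mem_univ v) hv, ite_self]
  simp only [pr, hterm, ← Fintype.prod_sum, M.sum_one, prod_const_one]

end

section

variable {n : ℕ} (r : Fin n) (h : ℝ)

/-- Colours are vertices: the colour of the hub `r` is the vertex it snubs, uniform among the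
others; a vertex `v ≠ r` has colour `v` when high (probability `h`) and `r` when low. -/
noncomputable def hubWeight (v c : Fin n) : ℝ :=
  if v = r then (if c = r then 0 else 1 / ((n : ℝ) - 1))
  else if c = r then 1 - h else if c = v then h else 0

def hubEdge (u v a b : Fin n) : Prop :=
  (u ≠ r ∧ v ≠ r ∧ a ≠ r ∧ b ≠ r) ∨ (u = r ∧ b = r ∧ a ≠ v) ∨ (v = r ∧ a = r ∧ b ≠ u)

variable {r h}

theorem hubWeight_nonneg (h0 : 0 ≤ h) (h1 : h ≤ 1) (v c : Fin n) : 0 ≤ hubWeight r h v c := by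
  have : (1 : ℝ) ≤ n := by exact_mod_cast r.pos
  have : 0 ≤ 1 / ((n : ℝ) - 1) := one_div_nonneg.mpr (by linarith)
  unfold hubWeight
  split_ifs <;> linarith

theorem sum_hubWeight (hn : 2 ≤ n) (v : Fin n) : ∑ c, hubWeight r h v c = 1 := by
  by_cases hv : v = r
  · have : (n : ℝ) - 1 ≠ 0 := by
      have : (2 : ℝ) ≤ n := by exact_mod_cast hn
      linarith
    simp [hubWeight, hv, sum_ite, filter_ne', Nat.cast_sub (by omega : 1 ≤ n), this]
  · rw [Fintype.sum_eq_add r v (Ne.symm hv) fun c hc => by simp [hubWeight, hv, hc.1, hc.2]]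
    simp [hubWeight, hv]

theorem ne_of_hubWeight_hub_ne_zero {c : Fin n} (hc : hubWeight r h r c ≠ 0) : c ≠ r := by
  rintro rfl
  simp [hubWeight] at hc

theorem hubEdge_comm (u v a b : Fin n) : hubEdge r u v a b ↔ hubEdge r v u b a := by
  unfold hubEdge
  tauto

noncomputable abbrev hubModel (r : Fin n) (hn : 2 ≤ n) (h0 : 0 ≤ h) (h1 : h ≤ 1) :
    ColoringModel n where
  Ω _ := Fin n
  fin _ := inferInstance
  p := hubWeight r h
  nonneg := hubWeight_nonneg h0 h1
  sum_one := sum_hubWeight hn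
  f u v a b := decide (hubEdge r u v a b)
  symm u v a b := decide_eq_decide.mpr (hubEdge_comm u v a b)

variable (hn : 2 ≤ n) (h0 : 0 ≤ h) (h1 : h ≤ 1)

theorem hubModel_adj_iff {ω : Fin n → Fin n} {u v : Fin n} :
    ((hubModel r hn h0 h1).graph ω).Adj u v ↔ u ≠ v ∧ hubEdge r u v (ω u) (ω v) := by
  simp [graph]

theorem hubModel_not_connected {ω : Fin n → Fin n} (hωr : ω r ≠ r) :
    ¬ ((hubModel r hn h0 h1).graph ω).Connected := by
  by_cases hhigh : ∃ t, t ≠ r ∧ ω t ≠ r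
  · obtain ⟨t, htr, ht⟩ := hhigh
    refine SimpleGraph.not_connected_of_adj_closed {x | x = r ∨ ω x = r} ?_
      (x := r) (y := t) (Or.inl rfl) (by simp [htr, ht])
    intro a b hab ha
    have hedge := ((hubModel_adj_iff hn h0 h1).mp hab).2
    simp only [hubEdge, Set.mem_ofPred_eq] at hedge ha ⊢
    grind
  · simp only [not_exists, not_and, not_not] at hhigh
    refine SimpleGraph.not_connected_of_adj_closed {ω r} ?_ rfl (Ne.symm hωr)
    intro a b hab ha
    have hedge := ((hubModel_adj_iff hn h0 h1).mp hab).2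
    simp only [hubEdge, Set.mem_singleton_iff] at hedge ha
    grind

theorem hubModel_pr_not_connected :
    (hubModel r hn h0 h1).pr (fun G => ¬ G.Connected) = 1 :=
  pr_eq_one _ fun _ hω =>
    hubModel_not_connected hn h0 h1 (ne_of_hubWeight_hub_ne_zero (hω r))

theorem hubModel_mul_le_pr_adj_hub {v : Fin n} (hv : v ≠ r) :
    (1 - 1 / ((n : ℝ) - 1)) * (1 - h) ≤ (hubModel r hn h0 h1).pr (fun G => G.Adj r v) :=
  calc (1 - 1 / ((n : ℝ) - 1)) * (1 - h)
      = (∑ c ∈ univ.erase v, hubWeight r h r c) * ∑ b ∈ {r}, hubWeight r h v b := by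
        rw [sum_erase_eq_sub (mem_univ v), sum_hubWeight hn]
        simp [hubWeight, hv]
    _ ≤ _ := (hubModel r hn h0 h1).mul_sum_le_pr hv.symm (univ.erase v) {r}
      fun ω hr hv' =>
        (hubModel_adj_iff hn h0 h1).mpr ⟨hv.symm, by simp_all [hubEdge]⟩

theorem hubModel_sq_le_pr_adj {u v : Fin n} (hu : u ≠ r) (hv : v ≠ r) (huv : u ≠ v) :
    h ^ 2 ≤ (hubModel r hn h0 h1).pr (fun G => G.Adj u v) :=
  calc h ^ 2 = (∑ a ∈ {u}, hubWeight r h u a) * ∑ b ∈ {v}, hubWeight r h v b := by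
        simp [hubWeight, hu, hv, sq]
    _ ≤ _ := (hubModel r hn h0 h1).mul_sum_le_pr huv {u} {v}
      fun ω hu' hv' =>
        (hubModel_adj_iff hn h0 h1).mpr ⟨huv, by simp_all [hubEdge]⟩

theorem hubModel_min_le_pr_adj {u v : Fin n} (huv : u ≠ v) :
    min (h ^ 2) ((1 - 1 / ((n : ℝ) - 1)) * (1 - h)) ≤
      (hubModel r hn h0 h1).pr (fun G => G.Adj u v) := by
  obtain rfl | hu := eq_or_ne u r
  · exact (min_le_right _ _).trans (hubModel_mul_le_pr_adj_hub hn h0 h1 huv.symm)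
  obtain rfl | hv := eq_or_ne v r
  · simp_rw [SimpleGraph.adj_comm _ u]
    exact (min_le_right _ _).trans (hubModel_mul_le_pr_adj_hub hn h0 h1 huv)
  exact (min_le_left _ _).trans (hubModel_sq_le_pr_adj hn h0 h1 hu hv huv)

end

end ColoringModel

/-- The root in `[0, 1]` of `h ^ 2 = (1 - 1 / (n - 1)) * (1 - h)`. -/
noncomputable def balancedHighProb (n : ℕ) : ℝ :=
  (√(5 * (n : ℝ) ^ 2 - 16 * n + 12) - ((n : ℝ) - 2)) / (2 * ((n : ℝ) - 1))

variable {n : ℕ}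

theorem balancedHighProb_nonneg (hn : 2 ≤ n) : 0 ≤ balancedHighProb n := by
  have h2 : (2 : ℝ) ≤ n := by exact_mod_cast hn
  have : (n : ℝ) - 2 ≤ √(5 * (n : ℝ) ^ 2 - 16 * n + 12) :=
    Real.le_sqrt_of_sq_le (by nlinarith)
  unfold balancedHighProb
  exact div_nonneg (by linarith) (by linarith)

theorem balancedHighProb_le_one (hn : 2 ≤ n) : balancedHighProb n ≤ 1 := by
  have h2 : (2 : ℝ) ≤ n := by exact_mod_cast hn
  have : √(5 * (n : ℝ) ^ 2 - 16 * n + 12) ≤ 3 * n - 4 :=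
    Real.sqrt_le_iff.mpr ⟨by linarith, by nlinarith⟩
  unfold balancedHighProb
  rw [div_le_one (by linarith)]
  linarith

theorem sq_balancedHighProb_eq_mul (hn : 2 ≤ n) :
    balancedHighProb n ^ 2 = (1 - 1 / ((n : ℝ) - 1)) * (1 - balancedHighProb n) := by
  have h2 : (2 : ℝ) ≤ n := by exact_mod_cast hn
  have hs := Real.sq_sqrt (by nlinarith : 0 ≤ 5 * (n : ℝ) ^ 2 - 16 * n + 12)
  have : (n : ℝ) - 1 ≠ 0 := by linarith
  unfold balancedHighProb
  generalize √(5 * (n : ℝ) ^ 2 - 16 * n + 12) = s at hs ⊢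
  field_simp
  linear_combination hs

theorem sq_balancedHighProb (hn : 2 ≤ n) :
    balancedHighProb n ^ 2 = ((n : ℝ) - 2) * (3 * (n : ℝ) - 4 - √(5 * (n : ℝ) ^ 2 - 16 * n + 12))
      / (2 * ((n : ℝ) - 1) ^ 2) := by
  have h2 : (2 : ℝ) ≤ n := by exact_mod_cast hn
  have hs := Real.sq_sqrt (by nlinarith : 0 ≤ 5 * (n : ℝ) ^ 2 - 16 * n + 12)
  have : (n : ℝ) - 1 ≠ 0 := by linarith
  unfold balancedHighProb
  generalize √(5 * (n : ℝ) ^ 2 - 16 * n + 12) = s at hs ⊢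
  field_simp
  linear_combination hs

theorem coloring_model_lower_bound (n : ℕ) (hn : 3 ≤ n) :
    ∃ M : ColoringModel n,
      (∀ u v : Fin n, u ≠ v →
        ((n : ℝ) - 2) * (3 * (n : ℝ) - 4 - Real.sqrt (5 * (n : ℝ) ^ 2 - 16 * n + 12))
            / (2 * ((n : ℝ) - 1) ^ 2)
          ≤ M.pr (fun G => G.Adj u v)) ∧
      M.pr (fun G => ¬ G.Connected) = 1 := by
  have hn2 : 2 ≤ n := by omega
  have h0 := balancedHighProb_nonneg hn2
  have h1 := balancedHighProb_le_one hn2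
  let r : Fin n := ⟨0, by omega⟩
  refine ⟨ColoringModel.hubModel r hn2 h0 h1, fun u v huv => ?_,
    ColoringModel.hubModel_pr_not_connected hn2 h0 h1⟩
  have hedge := ColoringModel.hubModel_min_le_pr_adj (r := r) hn2 h0 h1 huv
  rwa [← sq_balancedHighProb_eq_mul hn2, min_self, sq_balancedHighProb hn2] at hedge
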